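/- Let γ > 1, 0 < δ, ε' ≥ 0 with ε' < 1, and assume 2γ − 4δ > 2. For each τ ≥ 0 and q₀ ∈ ℝ, the integral over the exterior region I(τ) := ∫_{r ≥ max(0, τ+q₀)} r²/( (1+τ+r)^{1−ε'} (1+|r−τ|)^{2+2γ−4δ} ) dr satisfies I(τ) ≤ C(γ,δ) (1+τ)^{1+ε'}, for a constant C(γ,δ) independent of τ and of q₀. -/
import Mathlib


open MeasureTheory

/-- The exterior-region spatial integral of the squared dispersive bound grows
at most like `(1+τ)^{1+ε'}`. -/
theorem stmt_14 (γ δ ε' : ℝ) (hγ : 1 < γ) (hδ : 0 < δ)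
    (hε'0 : 0 ≤ ε') (hε'1 : ε' < 1) (hmain : 2 < 2 * γ - 4 * δ) :
    ∃ C : ℝ, 0 < C ∧
      ∀ τ : ℝ, 0 ≤ τ → ∀ q₀ : ℝ,
        (∫ r in Set.Ioi (max 0 (τ + q₀)),
            r ^ 2 / ((1 + τ + r) ^ (1 - ε') * (1 + |r - τ|) ^ (2 + 2 * γ - 4 * δ)))
          ≤ C * (1 + τ) ^ (1 + ε') := by
  set p : ℝ := 2 + 2 * γ - 4 * δ with hp_def
  set s : ℝ := p - 1 - ε' with hs_def
  have hp4 : 4 < p := by simp only [hp_def]; linarith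
  have hs2 : 2 < s := by simp only [hs_def]; linarith
  have hint : Integrable (fun x : ℝ => (1 + ‖x‖) ^ (-s)) := by
    apply integrable_one_add_norm
    rw [Module.finrank_self]
    exact_mod_cast (by linarith : (1:ℝ) < s)
  set C₀ : ℝ := ∫ x : ℝ, (1 + ‖x‖) ^ (-s) with hC₀
  have hC₀0 : 0 ≤ C₀ := by
    apply integral_nonneg
    intro x
    positivity
  refine ⟨2 ^ (1 + ε') * (C₀ + 1), by positivity, ?_⟩
  intro τ hτ q₀
  set a : ℝ := max 0 (τ + q₀)
  set c : ℝ := (1 + 2 * τ) ^ (1 + ε') with hc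
  have hc0 : 0 ≤ c := by positivity
  have hgint : Integrable (fun x : ℝ => c * (1 + |x - τ|) ^ (-s)) := by
    have := (hint.comp_sub_right τ).const_mul c
    simpa [Real.norm_eq_abs] using this
  -- pointwise bound on the region
  have hpt : ∀ r : ℝ, 0 < r →
      r ^ 2 / ((1 + τ + r) ^ (1 - ε') * (1 + |r - τ|) ^ p)
        ≤ c * (1 + |r - τ|) ^ (-s) := by
    intro r hr
    set A : ℝ := 1 + τ + r with hA
    set B : ℝ := 1 + |r - τ| with hB
    have hA0 : 0 < A := by simp only [hA]; positivity
    have habs : 0 ≤ |r - τ| := abs_nonneg _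
    have hB1 : (1:ℝ) ≤ B := by simp only [hB]; linarith
    have hB0 : 0 < B := by linarith
    have h1 : r ^ 2 ≤ A ^ (2:ℕ) :=
      pow_le_pow_left₀ hr.le (by simp only [hA]; linarith) 2
    have hden : 0 < A ^ (1 - ε') * B ^ p := by positivity
    calc r ^ 2 / (A ^ (1 - ε') * B ^ p)
        ≤ A ^ (2:ℕ) / (A ^ (1 - ε') * B ^ p) := by
          exact div_le_div_of_nonneg_right h1 hden.le
      _ = A ^ (1 + ε') * B ^ (-p) := by
          rw [show (A:ℝ) ^ (2:ℕ) = A ^ ((2:ℕ):ℝ) from (Real.rpow_natCast A 2).symm,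
            div_mul_eq_div_div, ← Real.rpow_sub hA0,
            show ((2:ℕ):ℝ) - (1 - ε') = 1 + ε' by push_cast; ring,
            Real.rpow_neg hB0.le, div_eq_mul_inv]
      _ ≤ ((1 + 2 * τ) * B) ^ (1 + ε') * B ^ (-p) := by
          apply mul_le_mul_of_nonneg_right _ (Real.rpow_nonneg hB0.le _)
          apply Real.rpow_le_rpow hA0.le _ (by linarith)
          have hrle : r ≤ τ + |r - τ| := by
            have := le_abs_self (r - τ)
            linarith
          have : A ≤ 1 + 2 * τ + |r - τ| := by simp only [hA]; linarith
          nlinarith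
      _ = c * (B ^ (1 + ε') * B ^ (-p)) := by
          rw [Real.mul_rpow (by linarith) hB0.le, hc, mul_assoc]
      _ = c * B ^ (-s) := by
          rw [← Real.rpow_add hB0]
          congr 1
          simp only [hs_def]
          ring_nf
  have step1 : (∫ r in Set.Ioi a,
      r ^ 2 / ((1 + τ + r) ^ (1 - ε') * (1 + |r - τ|) ^ p))
      ≤ ∫ r in Set.Ioi a, c * (1 + |r - τ|) ^ (-s) := by
    apply integral_mono_of_nonneg
    · filter_upwards [ae_restrict_mem measurableSet_Ioi] with r hr
      have hr0 : (0:ℝ) < r := lt_of_le_of_lt (le_max_left 0 (τ + q₀)) hr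
      have hA0 : (0:ℝ) < 1 + τ + r := by positivity
      have hB0 : (0:ℝ) < 1 + |r - τ| := by positivity
      positivity
    · exact hgint.restrict
    · filter_upwards [ae_restrict_mem measurableSet_Ioi] with r hr
      exact hpt r (lt_of_le_of_lt (le_max_left 0 (τ + q₀)) hr)
  have step2 : (∫ r in Set.Ioi a, c * (1 + |r - τ|) ^ (-s)) ≤ c * C₀ := by
    have h := setIntegral_le_integral (s := Set.Ioi a) hgint
      (Filter.Eventually.of_forall fun x => by positivity)
    refine h.trans ?_
    rw [integral_const_mul]
    apply mul_le_mul_of_nonneg_left _ hc0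
    have : (∫ x : ℝ, (1 + |x - τ|) ^ (-s)) = C₀ := by
      rw [hC₀, ← integral_sub_right_eq_self (fun x : ℝ => (1 + ‖x‖) ^ (-s)) τ]
      simp [Real.norm_eq_abs]
    exact this.le
  have step3 : c * C₀ ≤ 2 ^ (1 + ε') * (C₀ + 1) * (1 + τ) ^ (1 + ε') := by
    have h1 : c ≤ 2 ^ (1 + ε') * (1 + τ) ^ (1 + ε') := by
      rw [hc, ← Real.mul_rpow (by norm_num) (by linarith)]
      apply Real.rpow_le_rpow (by linarith) (by linarith) (by linarith)
    calc c * C₀ ≤ (2 ^ (1 + ε') * (1 + τ) ^ (1 + ε')) * (C₀ + 1) := by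
          apply mul_le_mul h1 (by linarith) hC₀0 (by positivity)
      _ = 2 ^ (1 + ε') * (C₀ + 1) * (1 + τ) ^ (1 + ε') := by ring
  linarith [step1, step2, step3]
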